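/- arXiv:1510.08437 — 5 statements merged into one kernel-verified Lean document; each statement's English description precedes it below -/
import Mathlib

section
/- Let G be a prior on θ ∈ (0,∞), y | θ ~ Poisson(Nθ), and f_G the marginal pmf. Then for every integer k ≥ 1, E(θ^k | y) = [y]_k / N^k + (1/N^k) · (f_G(y+k)[y+k]_k − f_G(y)[y]_k) / f_G(y), where [y]_k = y(y−1)⋯(y−k+1) denotes the falling factorial, whenever f_G(y) > 0. -/
open MeasureTheory Real

/-- Robbins' formula for the `k`-th posterior moment in the Poisson empirical Bayes model:
`θ ~ G` on `(0,∞)`, `y | θ ~ Poisson(Nθ)`, `f_G` the marginal pmf.  Then for `k ≥ 1`,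
`E(θ^k | y) = [y]_k / N^k + (1/N^k)·(f_G(y+k)[y+k]_k − f_G(y)[y]_k)/f_G(y)`,
where `[y]_k = y(y−1)⋯(y−k+1)` is the falling factorial, whenever `f_G(y) > 0`. -/
theorem posterior_kth_moment_poisson
    (G : Measure ℝ) [IsProbabilityMeasure G] (N : ℝ) (hN : 0 < N)
    (hsupp : ∀ᵐ θ ∂G, 0 < θ)
    (fG : ℕ → ℝ)
    (hfG : ∀ y : ℕ, fG y
      = ∫ θ, Real.exp (-(N * θ)) * (N * θ) ^ y / (Nat.factorial y : ℝ) ∂G)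
    (hint : ∀ (j y : ℕ), Integrable
      (fun θ => θ ^ j * (Real.exp (-(N * θ)) * (N * θ) ^ y / (Nat.factorial y : ℝ))) G)
    (k : ℕ) (hk : 1 ≤ k) (y : ℕ) (hpos : 0 < fG y) :
    (∫ θ, θ ^ k * (Real.exp (-(N * θ)) * (N * θ) ^ y / (Nat.factorial y : ℝ)) ∂G) / fG y
      = (Nat.descFactorial y k : ℝ) / N ^ k
        + (1 / N ^ k)
          * ((fG (y + k) * (Nat.descFactorial (y + k) k : ℝ)
              - fG y * (Nat.descFactorial y k : ℝ)) / fG y) := by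
  have hfac : ((y + k).factorial : ℝ)
      = (y.factorial : ℝ) * ((y + k).descFactorial k : ℝ) := by
    rw [← Nat.cast_mul, ← Nat.factorial_mul_descFactorial (Nat.le_add_left k y)]
    simp
  have hfacy : (y.factorial : ℝ) ≠ 0 := Nat.cast_ne_zero.mpr (Nat.factorial_ne_zero y)
  have hfacyk : ((y + k).factorial : ℝ) ≠ 0 :=
    Nat.cast_ne_zero.mpr (Nat.factorial_ne_zero _)
  have hNk : (N : ℝ) ^ k ≠ 0 := pow_ne_zero _ hN.ne'
  have key : (∫ θ, θ ^ k * (Real.exp (-(N * θ)) * (N * θ) ^ y / (Nat.factorial y : ℝ)) ∂G)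
      = (((y + k).descFactorial k : ℝ) / N ^ k) * fG (y + k) := by
    rw [hfG (y + k), ← integral_const_mul]
    congr 1
    funext θ
    have : (N * θ) ^ (y + k) = (N * θ) ^ y * (N ^ k * θ ^ k) := by
      ring
    rw [this, hfac]
    field_simp
  rw [key]
  field_simp
  ring
end

section
/- Let μ ~ G (a prior on ℝ) and z | μ ~ N(μ, 1), with marginal density f_G(z) = ∫ φ(z − μ) dG(μ), where φ is the standard normal density. Then f_G is differentiable and E(μ | z) = z + f_G′(z)/f_G(z) (Tweedie's formula). -/
open MeasureTheory Real

/-!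
Differentiating under the integral sign, which is legitimate because `φ` and `φ' t = -t φ t`
are bounded and `G` is finite, gives `f_G'(z) = ∫ (μ - z) φ(z - μ) dG(μ)`, i.e.
`∫ μ φ(z - μ) dG(μ) = z f_G(z) + f_G'(z)`; dividing by `f_G(z) > 0` is Tweedie's formula.
-/

theorem integrable_comp_sub_of_abs_le {G : Measure ℝ} [IsFiniteMeasure G] {k : ℝ → ℝ}
    (hk : Measurable k) {C : ℝ} (hC : ∀ t, |k t| ≤ C) (z : ℝ) :
    Integrable (fun μ => k (z - μ)) G :=
  (integrable_const C).mono' (hk.comp (measurable_const.sub measurable_id)).aestronglyMeasurable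
    (.of_forall fun μ => hC (z - μ))

theorem hasDerivAt_integral_comp_sub {G : Measure ℝ} [IsFiniteMeasure G] {k k' : ℝ → ℝ}
    (hk : ∀ t, HasDerivAt k (k' t) t) {B C : ℝ} (hB : ∀ t, |k t| ≤ B)
    (hC : ∀ t, |k' t| ≤ C)
    (z : ℝ) :
    HasDerivAt (fun z => ∫ μ, k (z - μ) ∂G) (∫ μ, k' (z - μ) ∂G) z := by
  have hk_meas : Measurable k :=
    (Differentiable.continuous fun t => (hk t).differentiableAt).measurable
  have hk'_meas : Measurable k' := by
    rw [show k' = deriv k from funext fun t => (hk t).deriv.symm]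
    exact measurable_deriv k
  refine (hasDerivAt_integral_of_dominated_loc_of_deriv_le (bound := fun _ => C)
    Filter.univ_mem (.of_forall fun x => (integrable_comp_sub_of_abs_le hk_meas hB x).1)
    (integrable_comp_sub_of_abs_le hk_meas hB z)
    (integrable_comp_sub_of_abs_le hk'_meas hC z).1
    (.of_forall fun μ x _ => hC (x - μ)) (integrable_const C)
    (.of_forall fun μ x _ => ?_)).2
  exact (hk (x - μ)).comp_sub_const x μ

/-- Written in the shape of the integrand of `tweedie_formula`, so that
`fun μ => stdNormalDensity (z - μ)` unfolds to it. -/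
noncomputable def stdNormalDensity (t : ℝ) : ℝ := exp (-(t ^ 2) / 2) / √(2 * π)

theorem one_le_sqrt_two_mul_pi : 1 ≤ √(2 * π) :=
  one_le_sqrt.2 (by nlinarith [pi_gt_three])

theorem continuous_stdNormalDensity : Continuous stdNormalDensity := by
  unfold stdNormalDensity; fun_prop

theorem stdNormalDensity_pos (t : ℝ) : 0 < stdNormalDensity t := by
  unfold stdNormalDensity; positivity

theorem abs_stdNormalDensity_le_one (t : ℝ) : |stdNormalDensity t| ≤ 1 := by
  rw [abs_of_pos (stdNormalDensity_pos t), stdNormalDensity,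
    div_le_one (by positivity)]
  calc exp (-(t ^ 2) / 2) ≤ 1 := exp_le_one_iff.2 (by nlinarith [sq_nonneg t])
    _ ≤ √(2 * π) := one_le_sqrt_two_mul_pi

theorem abs_mul_exp_neg_sq_div_two_le_one (t : ℝ) : |t| * exp (-(t ^ 2) / 2) ≤ 1 := by
  have h : |t| ≤ exp (t ^ 2 / 2) := by
    nlinarith [add_one_le_exp (t ^ 2 / 2), sq_nonneg (|t| - 1), sq_abs t]
  rw [neg_div, exp_neg, mul_inv_le_iff₀ (exp_pos _)]
  simpa using h

theorem abs_mul_stdNormalDensity_le_one (t : ℝ) : |-t * stdNormalDensity t| ≤ 1 := by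
  rw [abs_mul, abs_neg, abs_of_pos (stdNormalDensity_pos t), stdNormalDensity, mul_div_assoc',
    div_le_one (by positivity)]
  exact (abs_mul_exp_neg_sq_div_two_le_one t).trans one_le_sqrt_two_mul_pi

theorem hasDerivAt_stdNormalDensity (t : ℝ) :
    HasDerivAt stdNormalDensity (-t * stdNormalDensity t) t := by
  have h : HasDerivAt (fun t : ℝ => -(t ^ 2) / 2) (-t) t :=
    (((hasDerivAt_id t).fun_pow 2).fun_neg.div_const 2).congr_deriv (by simp; ring)
  exact (h.exp.div_const √(2 * π)).congr_deriv (by rw [stdNormalDensity]; ring)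

theorem integrable_stdNormalDensity_comp_sub (G : Measure ℝ) [IsFiniteMeasure G] (z : ℝ) :
    Integrable (fun μ => stdNormalDensity (z - μ)) G :=
  integrable_comp_sub_of_abs_le continuous_stdNormalDensity.measurable
    abs_stdNormalDensity_le_one z

theorem integral_stdNormalDensity_comp_sub_pos (G : Measure ℝ) [IsFiniteMeasure G] [NeZero G]
    (z : ℝ) : 0 < ∫ μ, stdNormalDensity (z - μ) ∂G := by
  rw [integral_pos_iff_support_of_nonneg (fun μ => (stdNormalDensity_pos _).le)
    (integrable_stdNormalDensity_comp_sub G z)]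
  simp [Function.support_eq_univ fun μ => (stdNormalDensity_pos (z - μ)).ne', NeZero.ne]

/-- Tweedie's formula in the normal-means empirical Bayes model: `μ ~ G` (an arbitrary
probability measure on `ℝ`), `z | μ ~ N(μ,1)`, with marginal density
`f_G(z) = ∫ φ(z−μ) dG(μ)` (`φ` the standard normal density).  Then `f_G` is
differentiable and `E(μ | z) = z + f_G′(z)/f_G(z)`. -/
theorem tweedie_formula
    (G : Measure ℝ) [IsProbabilityMeasure G]
    (fG : ℝ → ℝ)
    (hfG : ∀ z : ℝ, fG z
      = ∫ μ, Real.exp (-((z - μ) ^ 2) / 2) / Real.sqrt (2 * Real.pi) ∂G) :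
    Differentiable ℝ fG ∧
      ∀ z : ℝ,
        (∫ μ, μ * (Real.exp (-((z - μ) ^ 2) / 2) / Real.sqrt (2 * Real.pi)) ∂G) / fG z
          = z + deriv fG z / fG z := by
  obtain rfl : fG = fun z => ∫ μ, stdNormalDensity (z - μ) ∂G := funext hfG
  have hderiv (z : ℝ) := hasDerivAt_integral_comp_sub (G := G) hasDerivAt_stdNormalDensity
    abs_stdNormalDensity_le_one abs_mul_stdNormalDensity_le_one z
  refine ⟨fun z => (hderiv z).differentiableAt, fun z => ?_⟩
  have hmoment : ∫ μ, μ * stdNormalDensity (z - μ) ∂G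
      = z * ∫ μ, stdNormalDensity (z - μ) ∂G
        + ∫ μ, -(z - μ) * stdNormalDensity (z - μ) ∂G := by
    rw [← integral_const_mul, ← integral_add]
    · congr 1; ext μ; ring
    · exact (integrable_stdNormalDensity_comp_sub G z).const_mul z
    · exact integrable_comp_sub_of_abs_le
        (continuous_neg.mul continuous_stdNormalDensity).measurable
        abs_mul_stdNormalDensity_le_one z
  show (∫ μ, μ * stdNormalDensity (z - μ) ∂G) / _ = _
  rw [(hderiv z).deriv, hmoment, add_div,
    mul_div_cancel_right₀ _ (integral_stdNormalDensity_comp_sub_pos G z).ne']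
end

section
/- In the Poisson empirical Bayes model, define the regularized posterior moment estimator Ê_ρ(θ^k | y) = [y]_k/N^k + (1/N^k)·Δ_Ĝ(y)/max(f_Ĝ(y), ρ), where Δ_G(y) = f_G(y+k)[y+k]_k − f_G(y)[y]_k. Then, with ‖h‖² = Σ_y h(y)² f_G(y), the error satisfies ‖Ê_ρ(θ^k|y) − E(θ^k|y)‖ ≤ (C_{G,ρ}/N^k)(‖(f_Ĝ − f_G)²‖^{1/2} + ‖(f_Ĝ(·+k) − f_G(·+k))²‖^{1/2}) + D_{G,ρ}/N^k, where C_{G,ρ} = ρ^{-2}‖Δ_G²‖^{1/2} + ρ^{-1}‖[y]_k²‖^{1/2} + ρ^{-1}‖[y+k]_k²‖^{1/2} and D_{G,ρ} = ‖(Δ_G(y)/f_G(y))·(1 − f_G(y)/ρ)_+‖. -/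
/-!
Write `m̂ = max (f_Ĝ y) ρ` and `m = max (f_G y) ρ`. Pointwise,
`Δ_Ĝ/m̂ - Δ_G/f_G = (Δ_Ĝ - Δ_G)/m̂ + (Δ_G/m̂ - Δ_G/m) + (Δ_G/m - Δ_G/f_G)`.
Since `m̂ ≥ ρ`, the first term is at most `ρ⁻¹ (|[y]_k (f_Ĝ - f_G)| + |[y+k]_k (f_Ĝ - f_G)(y+k)|)`;
since `max (·) ρ` is 1-Lipschitz and `m̂, m ≥ ρ`, the second is at most `ρ⁻² |Δ_G| |f_Ĝ - f_G|`;
the third equals `|Δ_G/f_G| (1 - f_G/ρ)₊`. Minkowski's inequality in the `f_G`-weighted `ℓ²` norm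
turns this pointwise bound into a bound on norms, and Cauchy–Schwarz gives
`‖u v‖ ≤ ‖u²‖^{1/2} ‖v²‖^{1/2}` for each product.
-/

open MeasureTheory Real

section WeightedL2Norm

variable {ι κ : Type*} {w u v : ι → ℝ}

noncomputable def weightedL2Norm (w u : ι → ℝ) : ℝ := √(∑' i, u i ^ 2 * w i)

lemma weightedL2Norm_nonneg : 0 ≤ weightedL2Norm w u := sqrt_nonneg _

lemma weightedL2Norm_abs : weightedL2Norm w (fun i => |u i|) = weightedL2Norm w u := by
  simp only [weightedL2Norm, sq_abs]

lemma weightedL2Norm_const_mul (c : ℝ) :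
    weightedL2Norm w (fun i => c * u i) = |c| * weightedL2Norm w u := by
  simp only [weightedL2Norm, mul_pow, mul_assoc, tsum_mul_left, sqrt_mul (sq_nonneg c),
    sqrt_sq_eq_abs]

lemma summable_sq_mul_of_abs_le (hw : ∀ i, 0 ≤ w i) (h : ∀ i, |u i| ≤ v i)
    (hv : Summable fun i => v i ^ 2 * w i) : Summable fun i => u i ^ 2 * w i :=
  hv.of_nonneg_of_le (fun i => by have := hw i; positivity) fun i =>
    mul_le_mul_of_nonneg_right (sq_le_sq' (neg_le_of_abs_le (h i)) (le_of_abs_le (h i))) (hw i)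

lemma weightedL2Norm_le_of_abs_le (hw : ∀ i, 0 ≤ w i) (h : ∀ i, |u i| ≤ v i)
    (hv : Summable fun i => v i ^ 2 * w i) : weightedL2Norm w u ≤ weightedL2Norm w v :=
  sqrt_le_sqrt <| (summable_sq_mul_of_abs_le hw h hv).tsum_le_tsum (fun i =>
    mul_le_mul_of_nonneg_right (sq_le_sq' (neg_le_of_abs_le (h i)) (le_of_abs_le (h i))) (hw i)) hv

lemma summable_sq_mul_add (hw : ∀ i, 0 ≤ w i) (hu : Summable fun i => u i ^ 2 * w i)
    (hv : Summable fun i => v i ^ 2 * w i) : Summable fun i => (u i + v i) ^ 2 * w i :=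
  ((hu.add hv).mul_left 2).of_nonneg_of_le (fun i => by have := hw i; positivity) fun i => by
    nlinarith [mul_nonneg (sq_nonneg (u i - v i)) (hw i)]

private lemma rpow_two_mul_sqrt {w : ℝ} (hw : 0 ≤ w) (x : ℝ) : (x * √w) ^ (2 : ℝ) = x ^ 2 * w := by
  rw [rpow_two, mul_pow, sq_sqrt hw]

lemma weightedL2Norm_add_le (hw : ∀ i, 0 ≤ w i) (hu : Summable fun i => u i ^ 2 * w i)
    (hv : Summable fun i => v i ^ 2 * w i) :
    weightedL2Norm w (fun i => u i + v i) ≤ weightedL2Norm w u + weightedL2Norm w v := by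
  have hu' : Summable fun i => |u i| ^ 2 * w i := by simpa only [sq_abs] using hu
  have hv' : Summable fun i => |v i| ^ 2 * w i := by simpa only [sq_abs] using hv
  have minkowski := Lp_add_le_tsum_of_nonneg' one_le_two
    (f := fun i => |u i| * √(w i)) (g := fun i => |v i| * √(w i))
    (fun i => by positivity) (fun i => by positivity)
    (by simpa only [rpow_two_mul_sqrt (hw _)] using hu')
    (by simpa only [rpow_two_mul_sqrt (hw _)] using hv')
  simp only [← add_mul, rpow_two_mul_sqrt (hw _), ← sqrt_eq_rpow] at minkowski
  calc weightedL2Norm w (fun i => u i + v i)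
      ≤ weightedL2Norm w (fun i => |u i| + |v i|) :=
        weightedL2Norm_le_of_abs_le hw (fun i => abs_add_le _ _) (summable_sq_mul_add hw hu' hv')
    _ ≤ weightedL2Norm w (fun i => |u i|) + weightedL2Norm w (fun i => |v i|) := minkowski
    _ = weightedL2Norm w u + weightedL2Norm w v := by rw [weightedL2Norm_abs, weightedL2Norm_abs]

lemma summable_and_tsum_mul_mul_le_of_nonneg (hw : ∀ i, 0 ≤ w i) (hu0 : ∀ i, 0 ≤ u i)
    (hv0 : ∀ i, 0 ≤ v i) (hu : Summable fun i => u i ^ 2 * w i)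
    (hv : Summable fun i => v i ^ 2 * w i) :
    (Summable fun i => u i * v i * w i) ∧
      ∑' i, u i * v i * w i ≤ weightedL2Norm w u * weightedL2Norm w v := by
  have cauchySchwarz := summable_and_inner_le_Lp_mul_Lq_tsum_of_nonneg HolderConjugate.two_two
    (f := fun i => u i * √(w i)) (g := fun i => v i * √(w i))
    (fun i => mul_nonneg (hu0 i) (sqrt_nonneg _)) (fun i => mul_nonneg (hv0 i) (sqrt_nonneg _))
    (by simpa only [rpow_two_mul_sqrt (hw _)] using hu)
    (by simpa only [rpow_two_mul_sqrt (hw _)] using hv)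
  have hprod : ∀ i, u i * √(w i) * (v i * √(w i)) = u i * v i * w i := fun i => by
    rw [mul_mul_mul_comm, mul_self_sqrt (hw i)]
  simp only [hprod, rpow_two_mul_sqrt (hw _), ← sqrt_eq_rpow] at cauchySchwarz
  exact cauchySchwarz

lemma summable_mul_sq_mul (hw : ∀ i, 0 ≤ w i) (hu : Summable fun i => (u i ^ 2) ^ 2 * w i)
    (hv : Summable fun i => (v i ^ 2) ^ 2 * w i) : Summable fun i => (u i * v i) ^ 2 * w i := by
  simpa only [mul_pow] using
    (summable_and_tsum_mul_mul_le_of_nonneg hw (fun i => sq_nonneg (u i))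
      (fun i => sq_nonneg (v i)) hu hv).1

lemma weightedL2Norm_mul_le (hw : ∀ i, 0 ≤ w i) (hu : Summable fun i => (u i ^ 2) ^ 2 * w i)
    (hv : Summable fun i => (v i ^ 2) ^ 2 * w i) :
    weightedL2Norm w (fun i => u i * v i)
      ≤ √(weightedL2Norm w fun i => u i ^ 2) * √(weightedL2Norm w fun i => v i ^ 2) := by
  rw [← sqrt_mul weightedL2Norm_nonneg]
  refine sqrt_le_sqrt ?_
  simpa only [mul_pow] using
    (summable_and_tsum_mul_mul_le_of_nonneg hw (fun i => sq_nonneg (u i))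
      (fun i => sq_nonneg (v i)) hu hv).2

lemma summable_sq_mul_sum (hw : ∀ i, 0 ≤ w i) (s : Finset κ) {u : κ → ι → ℝ}
    (hu : ∀ j ∈ s, Summable fun i => u j i ^ 2 * w i) :
    Summable fun i => (∑ j ∈ s, u j i) ^ 2 * w i := by
  classical
  induction s using Finset.induction_on with
  | empty => simp
  | insert j s hj ih =>
    simp only [Finset.sum_insert hj]
    exact summable_sq_mul_add hw (hu j (s.mem_insert_self j))
      (ih fun j' hj' => hu j' (Finset.mem_insert_of_mem hj'))

lemma weightedL2Norm_sum_le (hw : ∀ i, 0 ≤ w i) (s : Finset κ) {u : κ → ι → ℝ}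
    (hu : ∀ j ∈ s, Summable fun i => u j i ^ 2 * w i) :
    weightedL2Norm w (fun i => ∑ j ∈ s, u j i) ≤ ∑ j ∈ s, weightedL2Norm w (u j) := by
  classical
  induction s using Finset.induction_on with
  | empty => simp [weightedL2Norm]
  | insert j s hj ih =>
    have hus : ∀ j' ∈ s, Summable fun i => u j' i ^ 2 * w i :=
      fun j' hj' => hu j' (Finset.mem_insert_of_mem hj')
    simp only [Finset.sum_insert hj]
    exact (weightedL2Norm_add_le hw (hu j (s.mem_insert_self j))
      (summable_sq_mul_sum hw s hus)).trans (add_le_add le_rfl (ih hus))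

lemma weightedL2Norm_le_sum_const_mul (hw : ∀ i, 0 ≤ w i) {t : ι → ℝ} (s : Finset κ)
    (c : κ → ℝ) {u : κ → ι → ℝ} (hu : ∀ j ∈ s, Summable fun i => u j i ^ 2 * w i)
    (ht : ∀ i, |t i| ≤ ∑ j ∈ s, c j * |u j i|) :
    weightedL2Norm w t ≤ ∑ j ∈ s, |c j| * weightedL2Norm w (u j) := by
  have hcu : ∀ j ∈ s, Summable fun i => (|c j| * |u j i|) ^ 2 * w i := fun j hj => by
    simpa only [mul_pow, sq_abs, mul_assoc] using (hu j hj).mul_left (c j ^ 2)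
  have hle : ∀ i, |t i| ≤ ∑ j ∈ s, |c j| * |u j i| := fun i =>
    (ht i).trans <| Finset.sum_le_sum fun j _ =>
      mul_le_mul_of_nonneg_right (le_abs_self (c j)) (abs_nonneg _)
  calc weightedL2Norm w t ≤ weightedL2Norm w (fun i => ∑ j ∈ s, |c j| * |u j i|) :=
        weightedL2Norm_le_of_abs_le hw hle (summable_sq_mul_sum hw s hcu)
    _ ≤ ∑ j ∈ s, weightedL2Norm w (fun i => |c j| * |u j i|) := weightedL2Norm_sum_le hw s hcu
    _ = ∑ j ∈ s, |c j| * weightedL2Norm w (u j) := by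
        simp only [weightedL2Norm_const_mul, abs_abs, weightedL2Norm_abs]

end WeightedL2Norm

section Regularization

variable {ι : Type*} {ρ : ℝ}

lemma abs_div_max_sub_div_max_le (hρ : 0 < ρ) (Δ a b : ℝ) :
    |Δ / max a ρ - Δ / max b ρ| ≤ ρ⁻¹ ^ 2 * |Δ * (a - b)| := by
  have ha : ρ ≤ max a ρ := le_max_right a ρ
  have hb : ρ ≤ max b ρ := le_max_right b ρ
  have hab : 0 < max a ρ * max b ρ := by positivity
  have hsplit : Δ / max a ρ - Δ / max b ρ = Δ * (max b ρ - max a ρ) / (max a ρ * max b ρ) := by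
    field_simp
  rw [hsplit, abs_div, abs_of_pos hab, abs_mul, abs_mul, div_le_iff₀ hab]
  calc |Δ| * |max b ρ - max a ρ| ≤ |Δ| * |a - b| := by
        rw [abs_sub_comm a b]
        exact mul_le_mul_of_nonneg_left (abs_max_sub_max_le_abs b a ρ) (abs_nonneg Δ)
    _ = ρ⁻¹ ^ 2 * (|Δ| * |a - b|) * (ρ * ρ) := by field_simp
    _ ≤ ρ⁻¹ ^ 2 * (|Δ| * |a - b|) * (max a ρ * max b ρ) := by gcongr

lemma abs_div_max_sub_div_eq {f : ℝ} (hf : 0 < f) (hρ : 0 < ρ) (Δ : ℝ) :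
    |Δ / max f ρ - Δ / f| = |Δ / f| * max (1 - f / ρ) 0 := by
  rcases le_total ρ f with hρf | hfρ
  · have : 1 - f / ρ ≤ 0 := by rw [sub_nonpos, one_le_div hρ]; exact hρf
    simp [max_eq_left hρf, max_eq_right this]
  · have : 0 ≤ 1 - f / ρ := by rw [sub_nonneg, div_le_one hρ]; exact hfρ
    rw [max_eq_right hfρ, max_eq_left this, ← abs_of_nonneg this, ← abs_mul, abs_sub_comm]
    congr 1
    field_simp

lemma abs_div_max_sub_div_le {f : ℝ} (hf : 0 < f) (hρ : 0 < ρ) (Δ Δhat fhat : ℝ) :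
    |Δhat / max fhat ρ - Δ / f|
      ≤ ρ⁻¹ * |Δhat - Δ| + ρ⁻¹ ^ 2 * |Δ * (fhat - f)| + |Δ / f| * max (1 - f / ρ) 0 := by
  have hsplit : Δhat / max fhat ρ - Δ / f
      = (Δhat - Δ) / max fhat ρ + (Δ / max fhat ρ - Δ / max f ρ) + (Δ / max f ρ - Δ / f) := by
    ring
  have hfirst : |(Δhat - Δ) / max fhat ρ| ≤ ρ⁻¹ * |Δhat - Δ| := by
    rw [abs_div, abs_of_pos (hρ.trans_le (le_max_right _ _)), div_eq_inv_mul]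
    gcongr
    exact le_max_right _ _
  rw [hsplit, ← abs_div_max_sub_div_eq hf hρ]
  exact (abs_add_three _ _ _).trans
    (add_le_add (add_le_add hfirst (abs_div_max_sub_div_max_le hρ Δ fhat f)) le_rfl)

lemma abs_regularized_ratio_sub_le {f fhat f' fhat' a b : ℝ} (hf : 0 < f) (hρ : 0 < ρ) :
    |(fhat' * b - fhat * a) / max fhat ρ - (f' * b - f * a) / f|
      ≤ ρ⁻¹ ^ 2 * |(f' * b - f * a) * (fhat - f)| + ρ⁻¹ * |a * (fhat - f)|
        + ρ⁻¹ * |b * (fhat' - f')| + |(f' * b - f * a) / f * max (1 - f / ρ) 0| := by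
  have hΔ : |(fhat' * b - fhat * a) - (f' * b - f * a)| ≤ |a * (fhat - f)| + |b * (fhat' - f')| :=
    calc _ = |b * (fhat' - f') - a * (fhat - f)| := by ring_nf
      _ ≤ _ := (abs_sub _ _).trans_eq (add_comm _ _)
  have hΔρ := mul_le_mul_of_nonneg_left hΔ (inv_nonneg.2 hρ.le)
  rw [abs_mul (_ / f), abs_of_nonneg (le_max_right _ (0 : ℝ))]
  refine (abs_div_max_sub_div_le hf hρ _ _ _).trans ?_
  linarith

lemma weightedL2Norm_regularized_ratio_sub_le (hρ : 0 < ρ)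
    {f fhat f' fhat' a b Δ Δhat : ι → ℝ} (hf : ∀ i, 0 < f i)
    (hΔ : ∀ i, Δ i = f' i * b i - f i * a i) (hΔhat : ∀ i, Δhat i = fhat' i * b i - fhat i * a i)
    (hΔ2 : Summable fun i => (Δ i ^ 2) ^ 2 * f i) (ha2 : Summable fun i => (a i ^ 2) ^ 2 * f i)
    (hb2 : Summable fun i => (b i ^ 2) ^ 2 * f i)
    (hd2 : Summable fun i => ((fhat i - f i) ^ 2) ^ 2 * f i)
    (hd2' : Summable fun i => ((fhat' i - f' i) ^ 2) ^ 2 * f i)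
    (hD : Summable fun i => (Δ i / f i * max (1 - f i / ρ) 0) ^ 2 * f i) :
    weightedL2Norm f (fun i => Δhat i / max (fhat i) ρ - Δ i / f i)
      ≤ ρ⁻¹ ^ 2 * (√(weightedL2Norm f fun i => Δ i ^ 2)
            * √(weightedL2Norm f fun i => (fhat i - f i) ^ 2))
        + ρ⁻¹ * (√(weightedL2Norm f fun i => a i ^ 2)
            * √(weightedL2Norm f fun i => (fhat i - f i) ^ 2))
        + ρ⁻¹ * (√(weightedL2Norm f fun i => b i ^ 2)
            * √(weightedL2Norm f fun i => (fhat' i - f' i) ^ 2))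
        + weightedL2Norm f (fun i => Δ i / f i * max (1 - f i / ρ) 0) := by
  have hw : ∀ i, 0 ≤ f i := fun i => (hf i).le
  have hpointwise : ∀ i, |Δhat i / max (fhat i) ρ - Δ i / f i|
      ≤ ρ⁻¹ ^ 2 * |Δ i * (fhat i - f i)| + ρ⁻¹ * |a i * (fhat i - f i)|
        + ρ⁻¹ * |b i * (fhat' i - f' i)| + |Δ i / f i * max (1 - f i / ρ) 0| := fun i => by
    rw [hΔ, hΔhat]
    exact abs_regularized_ratio_sub_le (hf i) hρ
  grw [← weightedL2Norm_mul_le hw hΔ2 hd2, ← weightedL2Norm_mul_le hw ha2 hd2,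
    ← weightedL2Norm_mul_le hw hb2 hd2']
  refine (weightedL2Norm_le_sum_const_mul hw Finset.univ ![ρ⁻¹ ^ 2, ρ⁻¹, ρ⁻¹, 1]
      (u := ![fun i => Δ i * (fhat i - f i), fun i => a i * (fhat i - f i),
        fun i => b i * (fhat' i - f' i), fun i => Δ i / f i * max (1 - f i / ρ) 0])
      (fun j _ => by
        fin_cases j
        exacts [summable_mul_sq_mul hw hΔ2 hd2, summable_mul_sq_mul hw ha2 hd2,
          summable_mul_sq_mul hw hb2 hd2', hD])
      fun i => (hpointwise i).trans_eq (by simp [Fin.sum_univ_four])).trans_eq ?_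
  simp [Fin.sum_univ_four, abs_of_pos hρ]

end Regularization

theorem regularized_poisson_error_bound_general
    (N : ℝ) (hN : 0 < N) (k : ℕ) (ρ : ℝ) (hρ : 0 < ρ)
    (fG fGhat : ℕ → ℝ)
    (hpos : ∀ y : ℕ, 0 < fG y)
    -- abbreviations
    (ΔG ΔGhat : ℕ → ℝ)
    (hΔG : ∀ y : ℕ, ΔG y = fG (y + k) * (Nat.descFactorial (y + k) k : ℝ)
        - fG y * (Nat.descFactorial y k : ℝ))
    (hΔGhat : ∀ y : ℕ, ΔGhat y = fGhat (y + k) * (Nat.descFactorial (y + k) k : ℝ)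
        - fGhat y * (Nat.descFactorial y k : ℝ))
    (nrm : (ℕ → ℝ) → ℝ)
    (hnrm : ∀ h : ℕ → ℝ, nrm h = Real.sqrt (∑' y : ℕ, h y ^ 2 * fG y))
    -- all norms appearing are assumed finite
    (hs2 : Summable fun y : ℕ => ((ΔG y) ^ 2) ^ 2 * fG y)
    (hs3 : Summable fun y : ℕ => ((Nat.descFactorial y k : ℝ) ^ 2) ^ 2 * fG y)
    (hs4 : Summable fun y : ℕ => ((Nat.descFactorial (y + k) k : ℝ) ^ 2) ^ 2 * fG y)
    (hs5 : Summable fun y : ℕ => ((fGhat y - fG y) ^ 2) ^ 2 * fG y)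
    (hs6 : Summable fun y : ℕ => ((fGhat (y + k) - fG (y + k)) ^ 2) ^ 2 * fG y)
    (hs7 : Summable fun y : ℕ => ((ΔG y / fG y) * max (1 - fG y / ρ) 0) ^ 2 * fG y) :
    nrm (fun y =>
        ((Nat.descFactorial y k : ℝ) / N ^ k + ΔGhat y / (N ^ k * max (fGhat y) ρ))
          - ((Nat.descFactorial y k : ℝ) / N ^ k + ΔG y / (N ^ k * fG y)))
      ≤ (ρ⁻¹ ^ 2 * Real.sqrt (nrm fun y => (ΔG y) ^ 2)
            + ρ⁻¹ * Real.sqrt (nrm fun y => ((Nat.descFactorial y k : ℝ)) ^ 2)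
            + ρ⁻¹ * Real.sqrt (nrm fun y => ((Nat.descFactorial (y + k) k : ℝ)) ^ 2))
          / N ^ k
          * (Real.sqrt (nrm fun y => (fGhat y - fG y) ^ 2)
              + Real.sqrt (nrm fun y => (fGhat (y + k) - fG (y + k)) ^ 2))
        + nrm (fun y => (ΔG y / fG y) * max (1 - fG y / ρ) 0) / N ^ k := by
  obtain rfl : nrm = weightedL2Norm fG := funext hnrm
  have hrescale : (fun y => ((y.descFactorial k : ℝ) / N ^ k + ΔGhat y / (N ^ k * max (fGhat y) ρ))
      - ((y.descFactorial k : ℝ) / N ^ k + ΔG y / (N ^ k * fG y)))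
      = fun y => (N ^ k)⁻¹ * (ΔGhat y / max (fGhat y) ρ - ΔG y / fG y) := by
    ext y
    rw [mul_sub, mul_comm (N ^ k), mul_comm (N ^ k), ← div_div, ← div_div]
    ring
  rw [hrescale, weightedL2Norm_const_mul, abs_of_pos (inv_pos.2 (pow_pos hN k)),
    div_mul_eq_mul_div, ← add_div, div_eq_inv_mul]
  gcongr
  grw [weightedL2Norm_regularized_ratio_sub_le (f' := fun y => fG (y + k))
    (fhat' := fun y => fGhat (y + k)) hρ hpos hΔG hΔGhat hs2 hs3 hs4 hs5 hs6 hs7]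
  have hexpand : ∀ c₁ c₂ c₃ s₁ s₂ d : ℝ, (c₁ + c₂ + c₃) * (s₁ + s₂) + d
      = c₁ * s₁ + c₂ * s₁ + c₃ * s₂ + d + (c₁ * s₂ + c₂ * s₂ + c₃ * s₁) := by
    intros; ring
  rw [hexpand]
  exact le_add_of_le_of_nonneg (le_of_eq (by ring)) (by positivity)

/-- Error bound for the regularized posterior moment estimator in the Poisson empirical
Bayes model (Lemma "regularized-Poisson").  True prior `G` and estimated prior `Ghat`
have marginal pmfs `f_G`, `f_Ghat`; the true posterior moment is given by Robbins'
formula `E(θ^k|y) = [y]_k/N^k + Δ_G(y)/(N^k f_G(y))` with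
`Δ_G(y) = f_G(y+k)[y+k]_k − f_G(y)[y]_k`; the regularized estimator replaces
`f_Ghat(y)` by `max(f_Ghat(y), ρ)`.  With `‖h‖² = Σ_y h(y)² f_G(y)`,
`‖Ê_ρ(θ^k|y) − E(θ^k|y)‖
   ≤ (C_{G,ρ}/N^k)(‖(f_Ghat − f_G)²‖^{1/2} + ‖(f_Ghat(·+k) − f_G(·+k))²‖^{1/2}) + D_{G,ρ}/N^k`,
with `C_{G,ρ} = ρ⁻²‖Δ_G²‖^{1/2} + ρ⁻¹‖[y]_k²‖^{1/2} + ρ⁻¹‖[y+k]_k²‖^{1/2}` and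
`D_{G,ρ} = ‖(Δ_G/f_G)·(1 − f_G/ρ)₊‖`. -/
theorem regularized_poisson_error_bound
    (N : ℝ) (hN : 0 < N) (k : ℕ) (hk : 1 ≤ k) (ρ : ℝ) (hρ : 0 < ρ)
    (G Ghat : Measure ℝ) [IsProbabilityMeasure G] [IsProbabilityMeasure Ghat]
    (fG fGhat : ℕ → ℝ)
    (hfG : ∀ y : ℕ, fG y
      = ∫ θ, Real.exp (-(N * θ)) * (N * θ) ^ y / (Nat.factorial y : ℝ) ∂G)
    (hfGhat : ∀ y : ℕ, fGhat y
      = ∫ θ, Real.exp (-(N * θ)) * (N * θ) ^ y / (Nat.factorial y : ℝ) ∂Ghat)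
    (hpos : ∀ y : ℕ, 0 < fG y)
    -- abbreviations
    (ΔG ΔGhat : ℕ → ℝ)
    (hΔG : ∀ y : ℕ, ΔG y = fG (y + k) * (Nat.descFactorial (y + k) k : ℝ)
        - fG y * (Nat.descFactorial y k : ℝ))
    (hΔGhat : ∀ y : ℕ, ΔGhat y = fGhat (y + k) * (Nat.descFactorial (y + k) k : ℝ)
        - fGhat y * (Nat.descFactorial y k : ℝ))
    (nrm : (ℕ → ℝ) → ℝ)
    (hnrm : ∀ h : ℕ → ℝ, nrm h = Real.sqrt (∑' y : ℕ, h y ^ 2 * fG y))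
    -- all norms appearing are assumed finite
    (hs1 : Summable fun y : ℕ => ((ΔGhat y / (N ^ k * max (fGhat y) ρ)) - (ΔG y / (N ^ k * fG y))) ^ 2 * fG y)
    (hs2 : Summable fun y : ℕ => ((ΔG y) ^ 2) ^ 2 * fG y)
    (hs3 : Summable fun y : ℕ => ((Nat.descFactorial y k : ℝ) ^ 2) ^ 2 * fG y)
    (hs4 : Summable fun y : ℕ => ((Nat.descFactorial (y + k) k : ℝ) ^ 2) ^ 2 * fG y)
    (hs5 : Summable fun y : ℕ => ((fGhat y - fG y) ^ 2) ^ 2 * fG y)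
    (hs6 : Summable fun y : ℕ => ((fGhat (y + k) - fG (y + k)) ^ 2) ^ 2 * fG y)
    (hs7 : Summable fun y : ℕ => ((ΔG y / fG y) * max (1 - fG y / ρ) 0) ^ 2 * fG y) :
    nrm (fun y =>
        ((Nat.descFactorial y k : ℝ) / N ^ k + ΔGhat y / (N ^ k * max (fGhat y) ρ))
          - ((Nat.descFactorial y k : ℝ) / N ^ k + ΔG y / (N ^ k * fG y)))
      ≤ (ρ⁻¹ ^ 2 * Real.sqrt (nrm fun y => (ΔG y) ^ 2)
            + ρ⁻¹ * Real.sqrt (nrm fun y => ((Nat.descFactorial y k : ℝ)) ^ 2)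
            + ρ⁻¹ * Real.sqrt (nrm fun y => ((Nat.descFactorial (y + k) k : ℝ)) ^ 2))
          / N ^ k
          * (Real.sqrt (nrm fun y => (fGhat y - fG y) ^ 2)
              + Real.sqrt (nrm fun y => (fGhat (y + k) - fG (y + k)) ^ 2))
        + nrm (fun y => (ΔG y / fG y) * max (1 - fG y / ρ) 0) / N ^ k :=
  regularized_poisson_error_bound_general N hN k ρ hρ fG fGhat hpos ΔG ΔGhat hΔG hΔGhat nrm hnrm hs2
    hs3 hs4 hs5 hs6 hs7
end

section
/- Let f, f̂ be nonnegative functions, Δ, Δ̂ functions, and ρ > 0. If Δ̂ − Δ is a difference controlled by shifts of f̂ − f as in the Poisson setting, then for any weight measure with norm ‖·‖: ‖Δ̂/(f̂∨ρ) − Δ/(f∨ρ)‖ ≤ ρ^{-2}‖Δ²‖^{1/2}‖(f − f̂)²‖^{1/2} + ρ^{-1}‖a²‖^{1/2}‖(f − f̂)²‖^{1/2} + ρ^{-1}‖b²‖^{1/2}‖(f(·+k) − f̂(·+k))²‖^{1/2}, where Δ(y) = f(y+k)b(y) − f(y)a(y) and Δ̂(y) = f̂(y+k)b(y) − f̂(y)a(y)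 for given functions a(y) = [y]_k and b(y) = [y+k]_k. -/
open MeasureTheory Real

/-- Cauchy–Schwarz for tsums. -/
lemma my_tsum_cs (u v : ℕ → ℝ) (hu : ∀ i, 0 ≤ u i) (hv : ∀ i, 0 ≤ v i)
    (h2 : Summable fun i => u i ^ 2) (h3 : Summable fun i => v i ^ 2) :
    ∑' i, u i * v i ≤ Real.sqrt (∑' i, u i ^ 2) * Real.sqrt (∑' i, v i ^ 2) := by
  have hsum : Summable fun i => u i * v i := by
    refine Summable.of_nonneg_of_le (fun i => mul_nonneg (hu i) (hv i))
      (fun i => ?_) ((h2.add h3).div_const 2)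
    nlinarith [sq_nonneg (u i - v i)]
  refine Summable.tsum_le_of_sum_le hsum fun s => ?_
  calc ∑ i ∈ s, u i * v i
      ≤ Real.sqrt (∑ i ∈ s, u i ^ 2) * Real.sqrt (∑ i ∈ s, v i ^ 2) :=
        Real.sum_mul_le_sqrt_mul_sqrt s u v
    _ ≤ _ := by
        gcongr
        · exact Summable.sum_le_tsum s (fun i _ => sq_nonneg _) h2
        · exact Summable.sum_le_tsum s (fun i _ => sq_nonneg _) h3

/-- Triangle inequality for weighted ℓ² tsums. -/
lemma my_tsum_tri (x y w : ℕ → ℝ) (hx : ∀ i, 0 ≤ x i) (hy : ∀ i, 0 ≤ y i) (hw : ∀ i, 0 ≤ w i)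
    (h1 : Summable fun i => x i ^ 2 * w i) (h2 : Summable fun i => y i ^ 2 * w i) :
    Real.sqrt (∑' i, (x i + y i) ^ 2 * w i)
      ≤ Real.sqrt (∑' i, x i ^ 2 * w i) + Real.sqrt (∑' i, y i ^ 2 * w i) := by
  set A := Real.sqrt (∑' i, x i ^ 2 * w i) with hA
  set B := Real.sqrt (∑' i, y i ^ 2 * w i) with hB
  have hA2 : A ^ 2 = ∑' i, x i ^ 2 * w i :=
    Real.sq_sqrt (tsum_nonneg fun i => mul_nonneg (sq_nonneg _) (hw i))
  have hB2 : B ^ 2 = ∑' i, y i ^ 2 * w i :=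
    Real.sq_sqrt (tsum_nonneg fun i => mul_nonneg (sq_nonneg _) (hw i))
  have hu2 : (fun i => (x i * Real.sqrt (w i)) ^ 2) = fun i => x i ^ 2 * w i := by
    funext i; rw [mul_pow, Real.sq_sqrt (hw i)]
  have hv2 : (fun i => (y i * Real.sqrt (w i)) ^ 2) = fun i => y i ^ 2 * w i := by
    funext i; rw [mul_pow, Real.sq_sqrt (hw i)]
  have hcross : ∑' i, x i * y i * w i ≤ A * B := by
    have h := my_tsum_cs (fun i => x i * Real.sqrt (w i)) (fun i => y i * Real.sqrt (w i))
      (fun i => mul_nonneg (hx i) (Real.sqrt_nonneg _))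
      (fun i => mul_nonneg (hy i) (Real.sqrt_nonneg _))
      (by rw [hu2]; exact h1) (by rw [hv2]; exact h2)
    rw [hu2, hv2] at h
    have heq : (fun i => (x i * Real.sqrt (w i)) * (y i * Real.sqrt (w i)))
        = fun i => x i * y i * w i := by
      funext i; rw [mul_mul_mul_comm, Real.mul_self_sqrt (hw i)]
    rwa [heq] at h
  have hcs : Summable fun i => x i * y i * w i := by
    refine Summable.of_nonneg_of_le
      (fun i => mul_nonneg (mul_nonneg (hx i) (hy i)) (hw i))
      (fun i => ?_) ((h1.add h2).div_const 2)
    nlinarith [sq_nonneg (x i - y i), hw i]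
  have hexp : ∑' i, (x i + y i) ^ 2 * w i
      = (∑' i, x i ^ 2 * w i) + 2 * (∑' i, x i * y i * w i) + (∑' i, y i ^ 2 * w i) := by
    rw [← tsum_mul_left, ← Summable.tsum_add h1 ((hcs.mul_left 2)), ← Summable.tsum_add (h1.add (hcs.mul_left 2)) h2]
    exact tsum_congr fun i => by ring
  have hle : ∑' i, (x i + y i) ^ 2 * w i ≤ (A + B) ^ 2 := by
    rw [hexp]; nlinarith [hcross, hA2, hB2]
  calc Real.sqrt (∑' i, (x i + y i) ^ 2 * w i) ≤ Real.sqrt ((A + B) ^ 2) :=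
        Real.sqrt_le_sqrt hle
    _ = A + B := Real.sqrt_sq (by positivity)

lemma my_prod_summable (p q w : ℕ → ℝ) (hw : ∀ i, 0 ≤ w i)
    (h1 : Summable fun i => (p i ^ 2) ^ 2 * w i) (h2 : Summable fun i => (q i ^ 2) ^ 2 * w i) :
    Summable fun i => p i ^ 2 * q i ^ 2 * w i := by
  refine Summable.of_nonneg_of_le
    (fun i => mul_nonneg (mul_nonneg (sq_nonneg _) (sq_nonneg _)) (hw i))
    (fun i => ?_) ((h1.add h2).div_const 2)
  nlinarith [sq_nonneg (p i ^ 2 - q i ^ 2), hw i]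

/-- Bound for one term: `√(Σ (c|p||q|)² w) ≤ c √√(Σ p⁴ w) √√(Σ q⁴ w)`. -/
lemma my_term_bound (c : ℝ) (hc : 0 ≤ c) (p q w : ℕ → ℝ) (hw : ∀ i, 0 ≤ w i)
    (h1 : Summable fun i => (p i ^ 2) ^ 2 * w i) (h2 : Summable fun i => (q i ^ 2) ^ 2 * w i) :
    Real.sqrt (∑' i, (c * (|p i| * |q i|)) ^ 2 * w i)
      ≤ c * Real.sqrt (Real.sqrt (∑' i, (p i ^ 2) ^ 2 * w i))
          * Real.sqrt (Real.sqrt (∑' i, (q i ^ 2) ^ 2 * w i)) := by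
  have hu2 : (fun i => (p i ^ 2 * Real.sqrt (w i)) ^ 2) = fun i => (p i ^ 2) ^ 2 * w i := by
    funext i; rw [mul_pow, Real.sq_sqrt (hw i)]
  have hv2 : (fun i => (q i ^ 2 * Real.sqrt (w i)) ^ 2) = fun i => (q i ^ 2) ^ 2 * w i := by
    funext i; rw [mul_pow, Real.sq_sqrt (hw i)]
  have he : (fun i => (c * (|p i| * |q i|)) ^ 2 * w i)
      = fun i => c ^ 2 * ((p i ^ 2 * Real.sqrt (w i)) * (q i ^ 2 * Real.sqrt (w i))) := by
    funext i
    rw [mul_mul_mul_comm, Real.mul_self_sqrt (hw i), mul_pow, mul_pow, sq_abs, sq_abs]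
    ring
  rw [tsum_congr (fun i => congrFun he i), tsum_mul_left, Real.sqrt_mul (sq_nonneg c),
    Real.sqrt_sq hc]
  have hcs := my_tsum_cs (fun i => p i ^ 2 * Real.sqrt (w i)) (fun i => q i ^ 2 * Real.sqrt (w i))
    (fun i => mul_nonneg (sq_nonneg _) (Real.sqrt_nonneg _))
    (fun i => mul_nonneg (sq_nonneg _) (Real.sqrt_nonneg _))
    (by rw [hu2]; exact h1) (by rw [hv2]; exact h2)
  rw [hu2, hv2] at hcs
  rw [mul_assoc]
  gcongr
  calc Real.sqrt (∑' i, (p i ^ 2 * Real.sqrt (w i)) * (q i ^ 2 * Real.sqrt (w i)))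
      ≤ Real.sqrt (Real.sqrt (∑' i, (p i ^ 2) ^ 2 * w i) * Real.sqrt (∑' i, (q i ^ 2) ^ 2 * w i)) :=
        Real.sqrt_le_sqrt hcs
    _ = _ := Real.sqrt_mul (Real.sqrt_nonneg _) _

/-- Abstract form of the key inequality in the proof of the regularized Poisson bound:
for nonnegative sequences `f, f̂`, weights `w ≥ 0`, `a(y) = [y]_k`, `b(y) = [y+k]_k`,
`Δ(y) = f(y+k)b(y) − f(y)a(y)` and `Δ̂(y) = f̂(y+k)b(y) − f̂(y)a(y)`, and `ρ > 0`,
with the weighted norm `‖h‖ = (Σ_y h(y)² w(y))^{1/2}`: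
`‖Δ̂/(f̂∨ρ) − Δ/(f∨ρ)‖ ≤ ρ⁻²‖Δ²‖^{1/2}‖(f − f̂)²‖^{1/2}
    + ρ⁻¹‖a²‖^{1/2}‖(f − f̂)²‖^{1/2} + ρ⁻¹‖b²‖^{1/2}‖(f(·+k) − f̂(·+k))²‖^{1/2}`. -/
theorem abstract_regularized_ratio_bound
    (k : ℕ) (ρ : ℝ) (hρ : 0 < ρ)
    (f fhat w a b Δ Δhat : ℕ → ℝ)
    (hf : ∀ y, 0 ≤ f y) (hfhat : ∀ y, 0 ≤ fhat y) (hw : ∀ y, 0 ≤ w y)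
    (ha : ∀ y : ℕ, a y = (Nat.descFactorial y k : ℝ))
    (hb : ∀ y : ℕ, b y = (Nat.descFactorial (y + k) k : ℝ))
    (hΔ : ∀ y : ℕ, Δ y = f (y + k) * b y - f y * a y)
    (hΔhat : ∀ y : ℕ, Δhat y = fhat (y + k) * b y - fhat y * a y)
    -- all appearing norms assumed finite
    (hs1 : Summable fun y => (Δhat y / max (fhat y) ρ - Δ y / max (f y) ρ) ^ 2 * w y)
    (hs2 : Summable fun y => ((Δ y) ^ 2) ^ 2 * w y)
    (hs3 : Summable fun y => ((a y) ^ 2) ^ 2 * w y)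
    (hs4 : Summable fun y => ((b y) ^ 2) ^ 2 * w y)
    (hs5 : Summable fun y => ((f y - fhat y) ^ 2) ^ 2 * w y)
    (hs6 : Summable fun y => ((f (y + k) - fhat (y + k)) ^ 2) ^ 2 * w y) :
    Real.sqrt (∑' y : ℕ, (Δhat y / max (fhat y) ρ - Δ y / max (f y) ρ) ^ 2 * w y)
      ≤ ρ⁻¹ ^ 2 * Real.sqrt (Real.sqrt (∑' y : ℕ, ((Δ y) ^ 2) ^ 2 * w y))
            * Real.sqrt (Real.sqrt (∑' y : ℕ, ((f y - fhat y) ^ 2) ^ 2 * w y))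
        + ρ⁻¹ * Real.sqrt (Real.sqrt (∑' y : ℕ, ((a y) ^ 2) ^ 2 * w y))
            * Real.sqrt (Real.sqrt (∑' y : ℕ, ((f y - fhat y) ^ 2) ^ 2 * w y))
        + ρ⁻¹ * Real.sqrt (Real.sqrt (∑' y : ℕ, ((b y) ^ 2) ^ 2 * w y))
            * Real.sqrt (Real.sqrt (∑' y : ℕ, ((f (y + k) - fhat (y + k)) ^ 2) ^ 2 * w y)) := by
  have hρi : (0:ℝ) ≤ ρ⁻¹ := by positivity
  set e : ℕ → ℝ := fun y => f y - fhat y with he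
  set e' : ℕ → ℝ := fun y => f (y + k) - fhat (y + k) with he'
  set g1 : ℕ → ℝ := fun y => ρ⁻¹ ^ 2 * (|Δ y| * |e y|) with hg1
  set g2 : ℕ → ℝ := fun y => ρ⁻¹ * (|a y| * |e y|) with hg2
  set g3 : ℕ → ℝ := fun y => ρ⁻¹ * (|b y| * |e' y|) with hg3
  have hg1n : ∀ y, 0 ≤ g1 y := fun y => by positivity
  have hg2n : ∀ y, 0 ≤ g2 y := fun y => by positivity
  have hg3n : ∀ y, 0 ≤ g3 y := fun y => by positivity
  -- pointwise bound
  have hpt : ∀ y, |Δhat y / max (fhat y) ρ - Δ y / max (f y) ρ| ≤ g1 y + (g2 y + g3 y) := by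
    intro y
    set m : ℝ := max (f y) ρ with hm
    set mh : ℝ := max (fhat y) ρ with hmh
    have hm0 : 0 < m := lt_of_lt_of_le hρ (le_max_right _ _)
    have hmh0 : 0 < mh := lt_of_lt_of_le hρ (le_max_right _ _)
    have hmρ : ρ ≤ m := le_max_right _ _
    have hmhρ : ρ ≤ mh := le_max_right _ _
    have hD : Δhat y / mh - Δ y / m
        = (Δhat y - Δ y) / mh + Δ y * ((m - mh) / (mh * m)) := by
      field_simp
      ring
    have hmax : |m - mh| ≤ |e y| := by
      have := abs_max_sub_max_le_abs (f y) (fhat y) ρ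
      simpa [hm, hmh, he] using this
    have hΔd : |Δhat y - Δ y| ≤ |b y| * |e' y| + |a y| * |e y| := by
      have h1 : Δhat y - Δ y = b y * (fhat (y+k) - f (y+k)) + a y * (f y - fhat y) := by
        rw [hΔ y, hΔhat y]; ring
      rw [h1]
      calc |b y * (fhat (y+k) - f (y+k)) + a y * (f y - fhat y)|
          ≤ |b y * (fhat (y+k) - f (y+k))| + |a y * (f y - fhat y)| := abs_add_le _ _
        _ = |b y| * |e' y| + |a y| * |e y| := by
            rw [abs_mul, abs_mul, abs_sub_comm (fhat (y+k))]
    have hterm1 : |(Δhat y - Δ y) / mh| ≤ ρ⁻¹ * (|b y| * |e' y| + |a y| * |e y|) := by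
      rw [abs_div, abs_of_pos hmh0]
      calc |Δhat y - Δ y| / mh ≤ |Δhat y - Δ y| / ρ := by gcongr
        _ ≤ (|b y| * |e' y| + |a y| * |e y|) / ρ := by gcongr
        _ = ρ⁻¹ * (|b y| * |e' y| + |a y| * |e y|) := by rw [div_eq_inv_mul]
    have hterm2 : |Δ y * ((m - mh) / (mh * m))| ≤ ρ⁻¹ ^ 2 * (|Δ y| * |e y|) := by
      rw [abs_mul, abs_div, abs_of_pos (mul_pos hmh0 hm0)]
      have h2 : |m - mh| / (mh * m) ≤ |e y| / (ρ * ρ) := by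
        gcongr
      calc |Δ y| * (|m - mh| / (mh * m)) ≤ |Δ y| * (|e y| / (ρ * ρ)) := by
            gcongr
        _ = ρ⁻¹ ^ 2 * (|Δ y| * |e y|) := by
            rw [div_eq_mul_inv, mul_inv, sq]
            ring
    calc |Δhat y / mh - Δ y / m|
        = |(Δhat y - Δ y) / mh + Δ y * ((m - mh) / (mh * m))| := by rw [hD]
      _ ≤ |(Δhat y - Δ y) / mh| + |Δ y * ((m - mh) / (mh * m))| := abs_add_le _ _
      _ ≤ ρ⁻¹ * (|b y| * |e' y| + |a y| * |e y|) + ρ⁻¹ ^ 2 * (|Δ y| * |e y|) :=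
          add_le_add hterm1 hterm2
      _ = g1 y + (g2 y + g3 y) := by simp only [hg1, hg2, hg3]; ring
  -- summability of the gi² w
  have S1 : Summable fun i => g1 i ^ 2 * w i := by
    refine ((my_prod_summable Δ e w hw hs2 hs5).mul_left ((ρ⁻¹ ^ 2) ^ 2)).congr fun i => ?_
    simp only [hg1, mul_pow, sq_abs]
    ring
  have S2 : Summable fun i => g2 i ^ 2 * w i := by
    refine ((my_prod_summable a e w hw hs3 hs5).mul_left ((ρ⁻¹) ^ 2)).congr fun i => ?_
    simp only [hg2, mul_pow, sq_abs]
    ring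
  have S3 : Summable fun i => g3 i ^ 2 * w i := by
    refine ((my_prod_summable b e' w hw hs4 hs6).mul_left ((ρ⁻¹) ^ 2)).congr fun i => ?_
    simp only [hg3, mul_pow, sq_abs]
    ring
  have S23 : Summable fun i => (g2 i + g3 i) ^ 2 * w i := by
    refine Summable.of_nonneg_of_le (fun i => mul_nonneg (sq_nonneg _) (hw i)) (fun i => ?_)
      (((S2.add S3)).mul_left 2)
    have := hw i
    nlinarith [sq_nonneg (g2 i - g3 i)]
  have S123 : Summable fun i => (g1 i + (g2 i + g3 i)) ^ 2 * w i := by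
    refine Summable.of_nonneg_of_le (fun i => mul_nonneg (sq_nonneg _) (hw i)) (fun i => ?_)
      (((S1.add S23)).mul_left 2)
    have := hw i
    nlinarith [sq_nonneg (g1 i - (g2 i + g3 i))]
  -- chain of inequalities
  have stepA : Real.sqrt (∑' y : ℕ, (Δhat y / max (fhat y) ρ - Δ y / max (f y) ρ) ^ 2 * w y)
      ≤ Real.sqrt (∑' i, (g1 i + (g2 i + g3 i)) ^ 2 * w i) := by
    refine Real.sqrt_le_sqrt (Summable.tsum_le_tsum (fun i => ?_) hs1 S123)
    refine mul_le_mul_of_nonneg_right ?_ (hw i)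
    calc (Δhat i / max (fhat i) ρ - Δ i / max (f i) ρ) ^ 2
        = |Δhat i / max (fhat i) ρ - Δ i / max (f i) ρ| ^ 2 := (sq_abs _).symm
      _ ≤ (g1 i + (g2 i + g3 i)) ^ 2 := by
          have h := hpt i
          have h0 : (0:ℝ) ≤ |Δhat i / max (fhat i) ρ - Δ i / max (f i) ρ| := abs_nonneg _
          nlinarith
  have stepB := my_tsum_tri g1 (fun i => g2 i + g3 i) w hg1n
    (fun i => add_nonneg (hg2n i) (hg3n i)) hw S1 S23
  have stepC := my_tsum_tri g2 g3 w hg2n hg3n hw S2 S3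
  have T1 := my_term_bound (ρ⁻¹ ^ 2) (by positivity) Δ e w hw hs2 hs5
  have T2 := my_term_bound ρ⁻¹ hρi a e w hw hs3 hs5
  have T3 := my_term_bound ρ⁻¹ hρi b e' w hw hs4 hs6
  calc Real.sqrt (∑' y : ℕ, (Δhat y / max (fhat y) ρ - Δ y / max (f y) ρ) ^ 2 * w y)
      ≤ Real.sqrt (∑' i, (g1 i + (g2 i + g3 i)) ^ 2 * w i) := stepA
    _ ≤ Real.sqrt (∑' i, g1 i ^ 2 * w i) + Real.sqrt (∑' i, (g2 i + g3 i) ^ 2 * w i) := stepB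
    _ ≤ Real.sqrt (∑' i, g1 i ^ 2 * w i)
        + (Real.sqrt (∑' i, g2 i ^ 2 * w i) + Real.sqrt (∑' i, g3 i ^ 2 * w i)) := by
          gcongr
    _ ≤ _ := by
        rw [← add_assoc]
        exact add_le_add (add_le_add T1 T2) T3
end

section
/- Unregularized Poisson bound: with Ê(θ^k|y) the unregularized estimator (plug in f_Ĝ without regularization), for every ρ > 0, ‖Ê(θ^k|y) − E(θ^k|y)‖ ≤ N^{-k}[C_{G,ρ}(‖(f_Ĝ − f_G)²‖^{1/2} + ‖(f_Ĝ(·+k) − f_G(·+k))²‖^{1/2}) + D_{G,ρ} + D_{Ĝ,ρ}], and hence the bound holds with the infimum over ρ. -/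
open MeasureTheory Real


private lemma aux_summable_mul {w a b : ℕ → ℝ} (hw : ∀ y, 0 ≤ w y)
    (ha : Summable fun y => a y ^ 2 * w y) (hb : Summable fun y => b y ^ 2 * w y) :
    Summable fun y => a y * b y * w y := by
  apply Summable.of_abs
  refine Summable.of_nonneg_of_le (fun y => abs_nonneg _) (fun y => ?_)
    ((ha.add hb).mul_left 2⁻¹)
  have h1 : |a y * b y * w y| = |a y * b y| * w y := by
    rw [abs_mul, abs_of_nonneg (hw y)]
  rw [h1]
  have h2 : |a y * b y| ≤ 2⁻¹ * (a y ^ 2 + b y ^ 2) := by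
    rw [abs_mul]
    nlinarith [sq_nonneg (|a y| - |b y|), sq_abs (a y), sq_abs (b y), abs_nonneg (a y),
      abs_nonneg (b y)]
  calc |a y * b y| * w y ≤ 2⁻¹ * (a y ^ 2 + b y ^ 2) * w y :=
        mul_le_mul_of_nonneg_right h2 (hw y)
    _ = 2⁻¹ * (a y ^ 2 * w y + b y ^ 2 * w y) := by ring

private lemma aux_tsum_mul_le {w a b : ℕ → ℝ} (hw : ∀ y, 0 ≤ w y)
    (ha : Summable fun y => a y ^ 2 * w y) (hb : Summable fun y => b y ^ 2 * w y) :
    ∑' y, a y * b y * w y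
      ≤ Real.sqrt (∑' y, a y ^ 2 * w y) * Real.sqrt (∑' y, b y ^ 2 * w y) := by
  apply Summable.tsum_le_of_sum_le (aux_summable_mul hw ha hb)
  intro s
  have key : ∀ y, a y * b y * w y = (a y * Real.sqrt (w y)) * (b y * Real.sqrt (w y)) := by
    intro y
    have : Real.sqrt (w y) * Real.sqrt (w y) = w y := Real.mul_self_sqrt (hw y)
    linear_combination (-(a y * b y)) * this
  have keysq : ∀ y, (a y * Real.sqrt (w y)) ^ 2 = a y ^ 2 * w y := by
    intro y
    rw [mul_pow, Real.sq_sqrt (hw y)]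
  have keysq' : ∀ y, (b y * Real.sqrt (w y)) ^ 2 = b y ^ 2 * w y := by
    intro y
    rw [mul_pow, Real.sq_sqrt (hw y)]
  calc ∑ y ∈ s, a y * b y * w y
      = ∑ y ∈ s, (a y * Real.sqrt (w y)) * (b y * Real.sqrt (w y)) :=
        Finset.sum_congr rfl fun y _ => key y
    _ ≤ Real.sqrt (∑ y ∈ s, (a y * Real.sqrt (w y)) ^ 2)
          * Real.sqrt (∑ y ∈ s, (b y * Real.sqrt (w y)) ^ 2) := by
        rw [← Real.sqrt_mul (Finset.sum_nonneg fun y _ => sq_nonneg _)]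
        calc ∑ y ∈ s, (a y * Real.sqrt (w y)) * (b y * Real.sqrt (w y))
            ≤ |∑ y ∈ s, (a y * Real.sqrt (w y)) * (b y * Real.sqrt (w y))| := le_abs_self _
          _ = Real.sqrt ((∑ y ∈ s, (a y * Real.sqrt (w y)) * (b y * Real.sqrt (w y))) ^ 2) :=
              (Real.sqrt_sq_eq_abs _).symm
          _ ≤ _ := Real.sqrt_le_sqrt (Finset.sum_mul_sq_le_sq_mul_sq s _ _)
    _ ≤ Real.sqrt (∑' y, a y ^ 2 * w y) * Real.sqrt (∑' y, b y ^ 2 * w y) := by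
        apply mul_le_mul
        · apply Real.sqrt_le_sqrt
          rw [show (∑ y ∈ s, (a y * Real.sqrt (w y)) ^ 2) = ∑ y ∈ s, a y ^ 2 * w y from
            Finset.sum_congr rfl fun y _ => keysq y]
          exact Summable.sum_le_tsum s (fun y _ => mul_nonneg (sq_nonneg _) (hw y)) ha
        · apply Real.sqrt_le_sqrt
          rw [show (∑ y ∈ s, (b y * Real.sqrt (w y)) ^ 2) = ∑ y ∈ s, b y ^ 2 * w y from
            Finset.sum_congr rfl fun y _ => keysq' y]
          exact Summable.sum_le_tsum s (fun y _ => mul_nonneg (sq_nonneg _) (hw y)) hb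
        · exact Real.sqrt_nonneg _
        · exact Real.sqrt_nonneg _

private lemma aux_summable_sq_add {w a b : ℕ → ℝ} (hw : ∀ y, 0 ≤ w y)
    (ha : Summable fun y => a y ^ 2 * w y) (hb : Summable fun y => b y ^ 2 * w y) :
    Summable fun y => (a y + b y) ^ 2 * w y := by
  refine Summable.of_nonneg_of_le (fun y => mul_nonneg (sq_nonneg _) (hw y)) (fun y => ?_)
    (((ha.add hb).mul_left 2))
  have h : (a y + b y) ^ 2 ≤ 2 * (a y ^ 2 + b y ^ 2) := by nlinarith [sq_nonneg (a y - b y)]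
  calc (a y + b y) ^ 2 * w y ≤ 2 * (a y ^ 2 + b y ^ 2) * w y :=
        mul_le_mul_of_nonneg_right h (hw y)
    _ = 2 * (a y ^ 2 * w y + b y ^ 2 * w y) := by ring

private lemma aux_wn_add {w a b : ℕ → ℝ} (hw : ∀ y, 0 ≤ w y)
    (ha : Summable fun y => a y ^ 2 * w y) (hb : Summable fun y => b y ^ 2 * w y) :
    Real.sqrt (∑' y, (a y + b y) ^ 2 * w y)
      ≤ Real.sqrt (∑' y, a y ^ 2 * w y) + Real.sqrt (∑' y, b y ^ 2 * w y) := by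
  set A := Real.sqrt (∑' y, a y ^ 2 * w y) with hA
  set B := Real.sqrt (∑' y, b y ^ 2 * w y) with hB
  have hA0 : 0 ≤ A := Real.sqrt_nonneg _
  have hB0 : 0 ≤ B := Real.sqrt_nonneg _
  have hab : Summable fun y => a y * b y * w y := aux_summable_mul hw ha hb
  have hsq : ∀ y, (a y + b y) ^ 2 * w y
      = a y ^ 2 * w y + 2 * (a y * b y * w y) + b y ^ 2 * w y := fun y => by ring
  have htsum : ∑' y, (a y + b y) ^ 2 * w y
      = (∑' y, a y ^ 2 * w y) + 2 * (∑' y, a y * b y * w y) + (∑' y, b y ^ 2 * w y) := by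
    rw [tsum_congr hsq, Summable.tsum_add (((ha.add (hab.mul_left 2)))) hb,
      Summable.tsum_add ha (hab.mul_left 2), tsum_mul_left]
  have hAsq : (∑' y, a y ^ 2 * w y) = A ^ 2 := by
    rw [hA, Real.sq_sqrt (tsum_nonneg fun y => mul_nonneg (sq_nonneg _) (hw y))]
  have hBsq : (∑' y, b y ^ 2 * w y) = B ^ 2 := by
    rw [hB, Real.sq_sqrt (tsum_nonneg fun y => mul_nonneg (sq_nonneg _) (hw y))]
  have hcs := aux_tsum_mul_le hw ha hb
  have hle : ∑' y, (a y + b y) ^ 2 * w y ≤ (A + B) ^ 2 := by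
    rw [htsum]; rw [hAsq, hBsq]; nlinarith [hcs]
  calc Real.sqrt (∑' y, (a y + b y) ^ 2 * w y) ≤ Real.sqrt ((A + B) ^ 2) :=
        Real.sqrt_le_sqrt hle
    _ = A + B := Real.sqrt_sq (by linarith)

private lemma aux_wn_mono {w a b : ℕ → ℝ} (hw : ∀ y, 0 ≤ w y)
    (h : ∀ y, a y ^ 2 ≤ b y ^ 2) (hb : Summable fun y => b y ^ 2 * w y) :
    Real.sqrt (∑' y, a y ^ 2 * w y) ≤ Real.sqrt (∑' y, b y ^ 2 * w y) := by
  apply Real.sqrt_le_sqrt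
  refine Summable.tsum_le_tsum (fun y => mul_le_mul_of_nonneg_right (h y) (hw y)) ?_ hb
  exact Summable.of_nonneg_of_le (fun y => mul_nonneg (sq_nonneg _) (hw y))
    (fun y => mul_le_mul_of_nonneg_right (h y) (hw y)) hb

private lemma aux_summable_sq_mono {w a b : ℕ → ℝ} (hw : ∀ y, 0 ≤ w y)
    (h : ∀ y, a y ^ 2 ≤ b y ^ 2) (hb : Summable fun y => b y ^ 2 * w y) :
    Summable fun y => a y ^ 2 * w y :=
  Summable.of_nonneg_of_le (fun y => mul_nonneg (sq_nonneg _) (hw y))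
    (fun y => mul_le_mul_of_nonneg_right (h y) (hw y)) hb

private lemma aux_wn_smul {w h : ℕ → ℝ} (c : ℝ) (hc : 0 ≤ c) :
    Real.sqrt (∑' y, (c * h y) ^ 2 * w y) = c * Real.sqrt (∑' y, h y ^ 2 * w y) := by
  rw [tsum_congr (fun y => by ring : ∀ y : ℕ, (c * h y) ^ 2 * w y = c ^ 2 * (h y ^ 2 * w y)),
    tsum_mul_left, Real.sqrt_mul (sq_nonneg c), Real.sqrt_sq hc]

private lemma aux_cs_wn {w a b : ℕ → ℝ} (hw : ∀ y, 0 ≤ w y)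
    (ha : Summable fun y => (a y ^ 2) ^ 2 * w y) (hb : Summable fun y => (b y ^ 2) ^ 2 * w y) :
    Real.sqrt (∑' y, (a y * b y) ^ 2 * w y)
      ≤ Real.sqrt (Real.sqrt (∑' y, (a y ^ 2) ^ 2 * w y))
          * Real.sqrt (Real.sqrt (∑' y, (b y ^ 2) ^ 2 * w y)) := by
  have h := aux_tsum_mul_le hw ha hb
  calc Real.sqrt (∑' y, (a y * b y) ^ 2 * w y)
      = Real.sqrt (∑' y, a y ^ 2 * b y ^ 2 * w y) := by
        rw [tsum_congr (fun y => by ring :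
          ∀ y : ℕ, (a y * b y) ^ 2 * w y = a y ^ 2 * b y ^ 2 * w y)]
    _ ≤ Real.sqrt (Real.sqrt (∑' y, (a y ^ 2) ^ 2 * w y)
          * Real.sqrt (∑' y, (b y ^ 2) ^ 2 * w y)) := Real.sqrt_le_sqrt h
    _ = _ := Real.sqrt_mul (Real.sqrt_nonneg _) _

private lemma aux_wn_add5 {w a b c d e : ℕ → ℝ} (hw : ∀ y, 0 ≤ w y)
    (ha : Summable fun y => a y ^ 2 * w y) (hb : Summable fun y => b y ^ 2 * w y)
    (hc : Summable fun y => c y ^ 2 * w y) (hd : Summable fun y => d y ^ 2 * w y)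
    (he : Summable fun y => e y ^ 2 * w y) :
    Real.sqrt (∑' y, (a y + b y + c y + d y + e y) ^ 2 * w y)
      ≤ Real.sqrt (∑' y, a y ^ 2 * w y) + Real.sqrt (∑' y, b y ^ 2 * w y)
        + Real.sqrt (∑' y, c y ^ 2 * w y) + Real.sqrt (∑' y, d y ^ 2 * w y)
        + Real.sqrt (∑' y, e y ^ 2 * w y) := by
  have hab := aux_summable_sq_add hw ha hb
  have habc := aux_summable_sq_add hw hab hc
  have habcd := aux_summable_sq_add hw habc hd
  have s1 : Real.sqrt (∑' y, (a y + b y + c y + d y + e y) ^ 2 * w y)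
      ≤ Real.sqrt (∑' y, (a y + b y + c y + d y) ^ 2 * w y)
        + Real.sqrt (∑' y, e y ^ 2 * w y) :=
    aux_wn_add (a := fun y => a y + b y + c y + d y) (b := e) hw habcd he
  have s2 : Real.sqrt (∑' y, (a y + b y + c y + d y) ^ 2 * w y)
      ≤ Real.sqrt (∑' y, (a y + b y + c y) ^ 2 * w y) + Real.sqrt (∑' y, d y ^ 2 * w y) :=
    aux_wn_add (a := fun y => a y + b y + c y) (b := d) hw habc hd
  have s3 : Real.sqrt (∑' y, (a y + b y + c y) ^ 2 * w y)
      ≤ Real.sqrt (∑' y, (a y + b y) ^ 2 * w y) + Real.sqrt (∑' y, c y ^ 2 * w y) :=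
    aux_wn_add (a := fun y => a y + b y) (b := c) hw hab hc
  have s4 : Real.sqrt (∑' y, (a y + b y) ^ 2 * w y)
      ≤ Real.sqrt (∑' y, a y ^ 2 * w y) + Real.sqrt (∑' y, b y ^ 2 * w y) :=
    aux_wn_add hw ha hb
  linarith

private lemma aux_sq_div_le {x m ρ : ℝ} (hρ : 0 < ρ) (hm : ρ ≤ m) :
    (x / m) ^ 2 ≤ (ρ⁻¹ * x) ^ 2 := by
  have hm0 : 0 < m := lt_of_lt_of_le hρ hm
  have h1 : (x / m) ^ 2 = x ^ 2 / m ^ 2 := div_pow x m 2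
  have h2 : (ρ⁻¹ * x) ^ 2 = x ^ 2 / ρ ^ 2 := by
    rw [mul_pow, inv_pow, inv_mul_eq_div]
  rw [h1, h2]
  gcongr

private lemma aux_T4_sq {x δ m1 m2 ρ : ℝ} (hρ : 0 < ρ) (h1 : ρ ≤ m1) (h2 : ρ ≤ m2)
    (hδ : (m2 - m1) ^ 2 ≤ δ ^ 2) :
    (x * (m2 - m1) / (m1 * m2)) ^ 2 ≤ (ρ⁻¹ ^ 2 * (x * δ)) ^ 2 := by
  have hm1 : 0 < m1 := lt_of_lt_of_le hρ h1
  have hm2 : 0 < m2 := lt_of_lt_of_le hρ h2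
  have e1 : (x * (m2 - m1) / (m1 * m2)) ^ 2 = x ^ 2 * (m2 - m1) ^ 2 / (m1 * m2) ^ 2 := by
    rw [div_pow]; ring
  have e2 : (ρ⁻¹ ^ 2 * (x * δ)) ^ 2 = x ^ 2 * δ ^ 2 / (ρ * ρ) ^ 2 := by
    field_simp
  rw [e1, e2]
  apply div_le_div₀ (by positivity) (by nlinarith [sq_nonneg x]) (by positivity)
  exact pow_le_pow_left₀ (by positivity) (mul_le_mul h1 h2 hρ.le hm1.le) 2

set_option maxHeartbeats 1000000 in
/-- Unregularized Poisson bound (Lemma "unregularized-Poisson"): in the Poisson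
empirical Bayes model with true prior `G` and estimated prior `Ĝ`, the unregularized
estimator `Ê(θ^k|y) = [y]_k/N^k + Δ_Ĝ(y)/(N^k f_Ĝ(y))` satisfies, for every `ρ > 0`,
`‖Ê(θ^k|y) − E(θ^k|y)‖
   ≤ N^{-k}[C_{G,ρ}(‖(f_Ĝ − f_G)²‖^{1/2} + ‖(f_Ĝ(·+k) − f_G(·+k))²‖^{1/2})
              + D_{G,ρ} + D_{Ĝ,ρ}]`,
(and hence the bound with the infimum over `ρ`), where
`C_{G,ρ} = ρ⁻²‖Δ_G²‖^{1/2} + ρ⁻¹‖[y]_k²‖^{1/2} + ρ⁻¹‖[y+k]_k²‖^{1/2}`,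
`D_{G,ρ} = ‖(Δ_G/f_G)(1 − f_G/ρ)₊‖`, `D_{Ĝ,ρ} = ‖(Δ_Ĝ/f_Ĝ)(1 − f_Ĝ/ρ)₊‖`,
and `‖h‖² = Σ_y h(y)² f_G(y)` is weighted by the true marginal. -/
theorem unregularized_poisson_error_bound
    (N : ℝ) (hN : 0 < N) (k : ℕ) (hk : 1 ≤ k)
    (G Ghat : Measure ℝ) [IsProbabilityMeasure G] [IsProbabilityMeasure Ghat]
    (fG fGhat : ℕ → ℝ)
    (hfG : ∀ y : ℕ, fG y
      = ∫ θ, Real.exp (-(N * θ)) * (N * θ) ^ y / (Nat.factorial y : ℝ) ∂G)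
    (hfGhat : ∀ y : ℕ, fGhat y
      = ∫ θ, Real.exp (-(N * θ)) * (N * θ) ^ y / (Nat.factorial y : ℝ) ∂Ghat)
    (hpos : ∀ y : ℕ, 0 < fG y) (hposhat : ∀ y : ℕ, 0 < fGhat y)
    (ΔG ΔGhat : ℕ → ℝ)
    (hΔG : ∀ y : ℕ, ΔG y = fG (y + k) * (Nat.descFactorial (y + k) k : ℝ)
        - fG y * (Nat.descFactorial y k : ℝ))
    (hΔGhat : ∀ y : ℕ, ΔGhat y = fGhat (y + k) * (Nat.descFactorial (y + k) k : ℝ)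
        - fGhat y * (Nat.descFactorial y k : ℝ))
    (nrm : (ℕ → ℝ) → ℝ)
    (hnrm : ∀ h : ℕ → ℝ, nrm h = Real.sqrt (∑' y : ℕ, h y ^ 2 * fG y))
    -- all norms appearing are assumed finite
    (hs1 : Summable fun y : ℕ => (ΔGhat y / (N ^ k * fGhat y) - ΔG y / (N ^ k * fG y)) ^ 2 * fG y)
    (hs2 : Summable fun y : ℕ => ((ΔG y) ^ 2) ^ 2 * fG y)
    (hs3 : Summable fun y : ℕ => ((Nat.descFactorial y k : ℝ) ^ 2) ^ 2 * fG y)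
    (hs4 : Summable fun y : ℕ => ((Nat.descFactorial (y + k) k : ℝ) ^ 2) ^ 2 * fG y)
    (hs5 : Summable fun y : ℕ => ((fGhat y - fG y) ^ 2) ^ 2 * fG y)
    (hs6 : Summable fun y : ℕ => ((fGhat (y + k) - fG (y + k)) ^ 2) ^ 2 * fG y)
    (hs7 : ∀ ρ : ℝ, 0 < ρ →
      Summable fun y : ℕ => ((ΔG y / fG y) * max (1 - fG y / ρ) 0) ^ 2 * fG y)
    (hs8 : ∀ ρ : ℝ, 0 < ρ →
      Summable fun y : ℕ => ((ΔGhat y / fGhat y) * max (1 - fGhat y / ρ) 0) ^ 2 * fG y) :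
    ∀ ρ : ℝ, 0 < ρ →
      nrm (fun y =>
          ((Nat.descFactorial y k : ℝ) / N ^ k + ΔGhat y / (N ^ k * fGhat y))
            - ((Nat.descFactorial y k : ℝ) / N ^ k + ΔG y / (N ^ k * fG y)))
        ≤ (N ^ k)⁻¹
            * ((ρ⁻¹ ^ 2 * Real.sqrt (nrm fun y => (ΔG y) ^ 2)
                  + ρ⁻¹ * Real.sqrt (nrm fun y => ((Nat.descFactorial y k : ℝ)) ^ 2)
                  + ρ⁻¹ * Real.sqrt (nrm fun y => ((Nat.descFactorial (y + k) k : ℝ)) ^ 2))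
                * (Real.sqrt (nrm fun y => (fGhat y - fG y) ^ 2)
                    + Real.sqrt (nrm fun y => (fGhat (y + k) - fG (y + k)) ^ 2))
              + nrm (fun y => (ΔG y / fG y) * max (1 - fG y / ρ) 0)
              + nrm (fun y => (ΔGhat y / fGhat y) * max (1 - fGhat y / ρ) 0)) := by
  intro ρ hρ
  simp only [hnrm]
  have hw : ∀ y, 0 ≤ fG y := fun y => (hpos y).le
  have hNk : (0 : ℝ) < N ^ k := pow_pos hN k
  have hρinv : (0 : ℝ) ≤ ρ⁻¹ := (inv_pos.mpr hρ).le
  have hm1 : ∀ y, 0 < max (fGhat y) ρ := fun y => lt_max_iff.mpr (Or.inr hρ)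
  have hm2 : ∀ y, 0 < max (fG y) ρ := fun y => lt_max_iff.mpr (Or.inr hρ)
  set T1 : ℕ → ℝ := fun y => ΔGhat y / fGhat y * max (1 - fGhat y / ρ) 0 with hT1def
  set T2 : ℕ → ℝ := fun y =>
    (fGhat (y + k) - fG (y + k)) * (Nat.descFactorial (y + k) k : ℝ)
      / max (fGhat y) ρ with hT2def
  set T3 : ℕ → ℝ := fun y =>
    -((fGhat y - fG y) * (Nat.descFactorial y k : ℝ) / max (fGhat y) ρ) with hT3def
  set T4 : ℕ → ℝ := fun y =>
    ΔG y * (max (fG y) ρ - max (fGhat y) ρ)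
      / (max (fGhat y) ρ * max (fG y) ρ) with hT4def
  set T5 : ℕ → ℝ := fun y => -(ΔG y / fG y * max (1 - fG y / ρ) 0) with hT5def
  -- pointwise decomposition
  have hdecomp : ∀ y, ΔGhat y / fGhat y - ΔG y / fG y
      = T1 y + T2 y + T3 y + T4 y + T5 y := by
    intro y
    have ha := hposhat y
    have hb := hpos y
    have hma := hm1 y
    have hmb := hm2 y
    have c1 : ΔGhat y / fGhat y - ΔGhat y / max (fGhat y) ρ = T1 y := by
      rcases le_total ρ (fGhat y) with h | h
      · rw [max_eq_left h]
        have h0 : max (1 - fGhat y / ρ) 0 = 0 := max_eq_right (by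
          have : (1 : ℝ) ≤ fGhat y / ρ := (one_le_div hρ).mpr h
          linarith)
        simp [hT1def, h0]
      · rw [max_eq_right h]
        have hmax : max (1 - fGhat y / ρ) 0 = 1 - fGhat y / ρ := max_eq_left (by
          have : fGhat y / ρ ≤ 1 := (div_le_one hρ).mpr h
          linarith)
        simp only [hT1def, hmax]
        field_simp
    have c2 : (ΔGhat y - ΔG y) / max (fGhat y) ρ = T2 y + T3 y := by
      simp only [hT2def, hT3def, hΔG y, hΔGhat y]
      ring
    have c3 : ΔG y / max (fGhat y) ρ - ΔG y / max (fG y) ρ = T4 y := by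
      simp only [hT4def]
      field_simp
    have c4 : ΔG y / max (fG y) ρ - ΔG y / fG y = T5 y := by
      rcases le_total ρ (fG y) with h | h
      · rw [max_eq_left h]
        have h0 : max (1 - fG y / ρ) 0 = 0 := max_eq_right (by
          have : (1 : ℝ) ≤ fG y / ρ := (one_le_div hρ).mpr h
          linarith)
        simp [hT5def, h0]
      · rw [max_eq_right h]
        have hmax : max (1 - fG y / ρ) 0 = 1 - fG y / ρ := max_eq_left (by
          have : fG y / ρ ≤ 1 := (div_le_one hρ).mpr h
          linarith)
        simp only [hT5def, hmax]
        field_simp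
        ring
    have tele : ΔGhat y / fGhat y - ΔG y / fG y
        = (ΔGhat y / fGhat y - ΔGhat y / max (fGhat y) ρ)
          + (ΔGhat y - ΔG y) / max (fGhat y) ρ
          + (ΔG y / max (fGhat y) ρ - ΔG y / max (fG y) ρ)
          + (ΔG y / max (fG y) ρ - ΔG y / fG y) := by ring
    rw [tele, c1, c2, c3, c4]
    ring
  -- summability of the pieces
  have hsT1 : Summable fun y => T1 y ^ 2 * fG y :=
    (hs8 ρ hρ).congr fun y => by simp only [hT1def]
  have hsT5 : Summable fun y => T5 y ^ 2 * fG y :=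
    (hs7 ρ hρ).congr fun y => by simp only [hT5def]; ring
  have hg2sum : Summable fun y =>
      ((Nat.descFactorial (y + k) k : ℝ) * (fGhat (y + k) - fG (y + k))) ^ 2 * fG y :=
    (aux_summable_mul hw hs4 hs6).congr fun y => by ring
  have hg3sum : Summable fun y =>
      ((Nat.descFactorial y k : ℝ) * (fGhat y - fG y)) ^ 2 * fG y :=
    (aux_summable_mul hw hs3 hs5).congr fun y => by ring
  have hg4sum : Summable fun y => (ΔG y * (fGhat y - fG y)) ^ 2 * fG y :=
    (aux_summable_mul hw hs2 hs5).congr fun y => by ring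
  have hg2sum' : Summable fun y =>
      (ρ⁻¹ * ((Nat.descFactorial (y + k) k : ℝ) * (fGhat (y + k) - fG (y + k)))) ^ 2 * fG y :=
    (hg2sum.mul_left (ρ⁻¹ ^ 2)).congr fun y => by ring
  have hg3sum' : Summable fun y =>
      (ρ⁻¹ * ((Nat.descFactorial y k : ℝ) * (fGhat y - fG y))) ^ 2 * fG y :=
    (hg3sum.mul_left (ρ⁻¹ ^ 2)).congr fun y => by ring
  have hg4sum' : Summable fun y => (ρ⁻¹ ^ 2 * (ΔG y * (fGhat y - fG y))) ^ 2 * fG y :=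
    (hg4sum.mul_left ((ρ⁻¹ ^ 2) ^ 2)).congr fun y => by ring
  -- pointwise square bounds
  have hsq2 : ∀ y, T2 y ^ 2
      ≤ (ρ⁻¹ * ((Nat.descFactorial (y + k) k : ℝ) * (fGhat (y + k) - fG (y + k)))) ^ 2 := by
    intro y
    calc T2 y ^ 2
        ≤ (ρ⁻¹ * ((fGhat (y + k) - fG (y + k)) * (Nat.descFactorial (y + k) k : ℝ))) ^ 2 := by
          simp only [hT2def]
          exact aux_sq_div_le hρ (le_max_right _ _)
      _ = _ := by ring
  have hsq3 : ∀ y, T3 y ^ 2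
      ≤ (ρ⁻¹ * ((Nat.descFactorial y k : ℝ) * (fGhat y - fG y))) ^ 2 := by
    intro y
    have e : T3 y ^ 2 = ((fGhat y - fG y) * (Nat.descFactorial y k : ℝ) / max (fGhat y) ρ) ^ 2 := by
      simp only [hT3def]; ring
    calc T3 y ^ 2
        ≤ (ρ⁻¹ * ((fGhat y - fG y) * (Nat.descFactorial y k : ℝ))) ^ 2 := by
          rw [e]; exact aux_sq_div_le hρ (le_max_right _ _)
      _ = _ := by ring
  have hsq4 : ∀ y, T4 y ^ 2 ≤ (ρ⁻¹ ^ 2 * (ΔG y * (fGhat y - fG y))) ^ 2 := by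
    intro y
    have habs : |max (fG y) ρ - max (fGhat y) ρ| ≤ |fG y - fGhat y| :=
      abs_max_sub_max_le_abs (fG y) (fGhat y) ρ
    have hδ : (max (fG y) ρ - max (fGhat y) ρ) ^ 2 ≤ (fGhat y - fG y) ^ 2 := by
      have h1 := pow_le_pow_left₀ (abs_nonneg _) habs 2
      rw [sq_abs, sq_abs] at h1
      calc (max (fG y) ρ - max (fGhat y) ρ) ^ 2 ≤ (fG y - fGhat y) ^ 2 := h1
        _ = (fGhat y - fG y) ^ 2 := by ring
    simpa only [hT4def] using
      aux_T4_sq (x := ΔG y) (δ := fGhat y - fG y) hρ (le_max_right (fGhat y) ρ)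
        (le_max_right (fG y) ρ) hδ
  have hsT2 : Summable fun y => T2 y ^ 2 * fG y :=
    aux_summable_sq_mono hw hsq2 hg2sum'
  have hsT3 : Summable fun y => T3 y ^ 2 * fG y :=
    aux_summable_sq_mono hw hsq3 hg3sum'
  have hsT4 : Summable fun y => T4 y ^ 2 * fG y :=
    aux_summable_sq_mono hw hsq4 hg4sum'
  -- rewrite the LHS
  have hAeq : ∀ y : ℕ,
      (((Nat.descFactorial y k : ℝ) / N ^ k + ΔGhat y / (N ^ k * fGhat y))
          - ((Nat.descFactorial y k : ℝ) / N ^ k + ΔG y / (N ^ k * fG y)))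
        = (N ^ k)⁻¹ * (ΔGhat y / fGhat y - ΔG y / fG y) := by
    intro y
    have h1 := (hposhat y).ne'
    have h2 := (hpos y).ne'
    field_simp
    ring
  have hLHS : Real.sqrt (∑' y,
      (((Nat.descFactorial y k : ℝ) / N ^ k + ΔGhat y / (N ^ k * fGhat y))
          - ((Nat.descFactorial y k : ℝ) / N ^ k + ΔG y / (N ^ k * fG y))) ^ 2 * fG y)
      = (N ^ k)⁻¹ * Real.sqrt (∑' y, (ΔGhat y / fGhat y - ΔG y / fG y) ^ 2 * fG y) := by
    rw [tsum_congr (fun y => by rw [hAeq y])]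
    exact aux_wn_smul (N ^ k)⁻¹ (inv_nonneg.mpr hNk.le)
  rw [hLHS]
  apply mul_le_mul_of_nonneg_left ?_ (inv_nonneg.mpr hNk.le)
  -- main estimate without the N^k factor
  have htri : Real.sqrt (∑' y, (ΔGhat y / fGhat y - ΔG y / fG y) ^ 2 * fG y)
      ≤ Real.sqrt (∑' y, T1 y ^ 2 * fG y) + Real.sqrt (∑' y, T2 y ^ 2 * fG y)
        + Real.sqrt (∑' y, T3 y ^ 2 * fG y) + Real.sqrt (∑' y, T4 y ^ 2 * fG y)
        + Real.sqrt (∑' y, T5 y ^ 2 * fG y) := by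
    rw [tsum_congr (fun y => by rw [hdecomp y])]
    exact aux_wn_add5 hw hsT1 hsT2 hsT3 hsT4 hsT5
  -- identify T1 and T5 norms
  have eqn1 : Real.sqrt (∑' y, T1 y ^ 2 * fG y)
      = Real.sqrt (∑' y, (ΔGhat y / fGhat y * max (1 - fGhat y / ρ) 0) ^ 2 * fG y) := by
    rw [tsum_congr (fun y => by simp only [hT1def] :
      ∀ y : ℕ, T1 y ^ 2 * fG y = (ΔGhat y / fGhat y * max (1 - fGhat y / ρ) 0) ^ 2 * fG y)]
  have eqn5 : Real.sqrt (∑' y, T5 y ^ 2 * fG y)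
      = Real.sqrt (∑' y, (ΔG y / fG y * max (1 - fG y / ρ) 0) ^ 2 * fG y) := by
    rw [tsum_congr (fun y => by simp only [hT5def]; ring :
      ∀ y : ℕ, T5 y ^ 2 * fG y = (ΔG y / fG y * max (1 - fG y / ρ) 0) ^ 2 * fG y)]
  -- bound T2, T3, T4 norms
  have w2 : Real.sqrt (∑' y, T2 y ^ 2 * fG y)
      ≤ ρ⁻¹ * (Real.sqrt (Real.sqrt (∑' y, ((Nat.descFactorial (y + k) k : ℝ) ^ 2) ^ 2 * fG y))
          * Real.sqrt (Real.sqrt (∑' y, ((fGhat (y + k) - fG (y + k)) ^ 2) ^ 2 * fG y))) := by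
    have h1 : Real.sqrt (∑' y, T2 y ^ 2 * fG y)
        ≤ Real.sqrt (∑' y,
            (ρ⁻¹ * ((Nat.descFactorial (y + k) k : ℝ) * (fGhat (y + k) - fG (y + k)))) ^ 2
              * fG y) :=
      aux_wn_mono hw hsq2 hg2sum'
    rw [aux_wn_smul ρ⁻¹ hρinv] at h1
    exact h1.trans (mul_le_mul_of_nonneg_left (aux_cs_wn hw hs4 hs6) hρinv)
  have w3 : Real.sqrt (∑' y, T3 y ^ 2 * fG y)
      ≤ ρ⁻¹ * (Real.sqrt (Real.sqrt (∑' y, ((Nat.descFactorial y k : ℝ) ^ 2) ^ 2 * fG y))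
          * Real.sqrt (Real.sqrt (∑' y, ((fGhat y - fG y) ^ 2) ^ 2 * fG y))) := by
    have h1 : Real.sqrt (∑' y, T3 y ^ 2 * fG y)
        ≤ Real.sqrt (∑' y,
            (ρ⁻¹ * ((Nat.descFactorial y k : ℝ) * (fGhat y - fG y))) ^ 2 * fG y) :=
      aux_wn_mono hw hsq3 hg3sum'
    rw [aux_wn_smul ρ⁻¹ hρinv] at h1
    exact h1.trans (mul_le_mul_of_nonneg_left (aux_cs_wn hw hs3 hs5) hρinv)
  have w4 : Real.sqrt (∑' y, T4 y ^ 2 * fG y)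
      ≤ ρ⁻¹ ^ 2 * (Real.sqrt (Real.sqrt (∑' y, ((ΔG y) ^ 2) ^ 2 * fG y))
          * Real.sqrt (Real.sqrt (∑' y, ((fGhat y - fG y) ^ 2) ^ 2 * fG y))) := by
    have h1 : Real.sqrt (∑' y, T4 y ^ 2 * fG y)
        ≤ Real.sqrt (∑' y, (ρ⁻¹ ^ 2 * (ΔG y * (fGhat y - fG y))) ^ 2 * fG y) :=
      aux_wn_mono hw hsq4 hg4sum'
    rw [aux_wn_smul (ρ⁻¹ ^ 2) (by positivity)] at h1
    exact h1.trans (mul_le_mul_of_nonneg_left (aux_cs_wn hw hs2 hs5) (by positivity))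
  -- final arithmetic
  set X1 := Real.sqrt (Real.sqrt (∑' y, ((ΔG y) ^ 2) ^ 2 * fG y)) with hX1
  set X2 := Real.sqrt (Real.sqrt (∑' y, ((Nat.descFactorial y k : ℝ) ^ 2) ^ 2 * fG y)) with hX2
  set X3 := Real.sqrt (Real.sqrt (∑' y, ((Nat.descFactorial (y + k) k : ℝ) ^ 2) ^ 2 * fG y))
    with hX3
  set Y1 := Real.sqrt (Real.sqrt (∑' y, ((fGhat y - fG y) ^ 2) ^ 2 * fG y)) with hY1
  set Y2 := Real.sqrt (Real.sqrt (∑' y, ((fGhat (y + k) - fG (y + k)) ^ 2) ^ 2 * fG y)) with hY2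
  have hX1n : 0 ≤ X1 := Real.sqrt_nonneg _
  have hX2n : 0 ≤ X2 := Real.sqrt_nonneg _
  have hX3n : 0 ≤ X3 := Real.sqrt_nonneg _
  have hY1n : 0 ≤ Y1 := Real.sqrt_nonneg _
  have hY2n : 0 ≤ Y2 := Real.sqrt_nonneg _
  have p1 : 0 ≤ ρ⁻¹ ^ 2 * (X1 * Y2) := by positivity
  have p2 : 0 ≤ ρ⁻¹ * (X2 * Y2) := by positivity
  have p3 : 0 ≤ ρ⁻¹ * (X3 * Y1) := by positivity
  calc Real.sqrt (∑' y, (ΔGhat y / fGhat y - ΔG y / fG y) ^ 2 * fG y)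
      ≤ Real.sqrt (∑' y, T1 y ^ 2 * fG y) + Real.sqrt (∑' y, T2 y ^ 2 * fG y)
        + Real.sqrt (∑' y, T3 y ^ 2 * fG y) + Real.sqrt (∑' y, T4 y ^ 2 * fG y)
        + Real.sqrt (∑' y, T5 y ^ 2 * fG y) := htri
    _ ≤ _ := by
        rw [eqn1, eqn5]
        nlinarith [w2, w3, w4, p1, p2, p3]
end
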